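/- For any A ∈ 𝒫(T) and any x, y ∈ W, the twisted length function satisfies ℓ_A(xy) = ℓ_A(y) + ℓ_{y·A}(x). -/
import Mathlib


open scoped symmDiff

variable {B W : Type*} [Group W] {M : CoxeterMatrix B}

/-- `N(w) = {t ∈ T | ℓ(tw) < ℓ(w)}`, where `T` is the set of reflections. -/
def coxN (cs : CoxeterSystem M W) (w : W) : Set W :=
  {t : W | cs.IsReflection t ∧ cs.length (t * w) < cs.length w}

/-- Twisted conjugation: `w · A := N(w) + wAw⁻¹` (`+` is symmetric difference). -/
def twistedConj (cs : CoxeterSystem M W) (w : W) (A : Set W) : Set W :=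
  coxN cs w ∆ ((fun t => w * t * w⁻¹) '' A)

/-- Twisted length: `ℓ_A(w) := ℓ(w) − 2|N(w⁻¹) ∩ A|`. -/
noncomputable def twistedLength (cs : CoxeterSystem M W) (A : Set W) (w : W) : ℤ :=
  (cs.length w : ℤ) - 2 * (coxN cs w⁻¹ ∩ A).ncard

namespace TwistedAux

open CoxeterSystem List

open scoped Classical

/-- The basic sign-flipping map used to build the reflection cocycle. -/
noncomputable def sigma (cs : CoxeterSystem M W) (i : B) : Function.End (W × ZMod 2) :=
  fun p => (cs.simple i * p.1 * cs.simple i,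
    p.2 + if p.1 = cs.simple i then 1 else 0)

variable (cs : CoxeterSystem M W)

local prefix:100 "s" => cs.simple
local prefix:100 "π" => cs.wordProd
local prefix:100 "ℓ" => cs.length
local prefix:100 "ris" => cs.rightInvSeq

lemma sigma_mul_apply (i j : B) (p : W × ZMod 2) :
    (sigma cs i * sigma cs j) p =
      ((s i * s j) * p.1 * (s j * s i),
        p.2 + ((if p.1 = s j then 1 else 0)
          + if p.1 = (s j * s i) * s j then 1 else 0)) := by
  show sigma cs i (sigma cs j p) = _
  unfold sigma
  dsimp only
  have h1 : (s j * p.1 * s j = s i) ↔ (p.1 = (s j * s i) * s j) := by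
    constructor
    · intro h
      have h2 : s j * (s j * p.1 * s j) * s j = p.1 := by
        calc s j * (s j * p.1 * s j) * s j = (s j * s j) * p.1 * (s j * s j) := by
              simp only [mul_assoc]
          _ = p.1 := by rw [cs.simple_mul_simple_self]; simp
      rw [h] at h2
      rw [← h2]
    · intro h
      rw [h]
      calc s j * (s j * s i * s j) * s j = (s j * s j) * s i * (s j * s j) := by
            simp only [mul_assoc]
        _ = s i := by rw [cs.simple_mul_simple_self]; simp
  rw [Prod.ext_iff]
  refine ⟨?_, ?_⟩
  · dsimp only; simp only [mul_assoc]
  · dsimp only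
    rw [if_congr h1 rfl rfl]
    ring

lemma sigma_pow_apply (i j : B) (k : ℕ) (p : W × ZMod 2) :
    ((sigma cs i * sigma cs j) ^ k) p =
      ((s i * s j) ^ k * p.1 * (s j * s i) ^ k,
        p.2 + ∑ l ∈ Finset.range (2 * k),
          if p.1 = (s j * s i) ^ l * s j then 1 else 0) := by
  have hcq : (s i * s j) * (s j * s i) = 1 := by
    calc (s i * s j) * (s j * s i) = s i * (s j * (s j * s i)) := by simp only [mul_assoc]
      _ = s i * s i := by rw [cs.simple_mul_simple_cancel_left]
      _ = 1 := cs.simple_mul_simple_self i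
  have hqc : (s j * s i) * (s i * s j) = 1 := by
    calc (s j * s i) * (s i * s j) = s j * (s i * (s i * s j)) := by simp only [mul_assoc]
      _ = s j * s j := by rw [cs.simple_mul_simple_cancel_left]
      _ = 1 := cs.simple_mul_simple_self j
  induction k generalizing p with
  | zero =>
    simp only [pow_zero, mul_one, one_mul, Nat.mul_zero, Finset.range_zero,
      Finset.sum_empty, add_zero]
    rfl
  | succ k ih =>
    have hq : ∀ l : ℕ, ((s i * s j) * p.1 * (s j * s i) = (s j * s i) ^ l * s j)
        ↔ (p.1 = (s j * s i) ^ (l + 2) * s j) := by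
      intro l
      have key : (s j * s i) * ((s j * s i) ^ l * s j) * (s i * s j)
          = (s j * s i) ^ (l + 2) * s j := by
        calc (s j * s i) * ((s j * s i) ^ l * s j) * (s i * s j)
            = ((s j * s i) * (s j * s i) ^ l) * (s j * (s i * s j)) := by
              simp only [mul_assoc]
          _ = (s j * s i) ^ (l + 1) * ((s j * s i) * s j) := by
              rw [← pow_succ']; simp only [mul_assoc]
          _ = ((s j * s i) ^ (l + 1) * (s j * s i)) * s j := by simp only [mul_assoc]
          _ = (s j * s i) ^ (l + 2) * s j := by rw [← pow_succ]
      constructor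
      · intro h
        have h2 : (s j * s i) * ((s i * s j) * p.1 * (s j * s i)) * (s i * s j) = p.1 := by
          calc (s j * s i) * ((s i * s j) * p.1 * (s j * s i)) * (s i * s j)
              = ((s j * s i) * (s i * s j)) * p.1 * ((s j * s i) * (s i * s j)) := by
                simp only [mul_assoc]
            _ = p.1 := by rw [hqc]; simp
        rw [h] at h2
        rw [← h2, key]
      · intro h
        rw [h]
        calc (s i * s j) * ((s j * s i) ^ (l + 2) * s j) * (s j * s i)
            = ((s i * s j) * (s j * s i)) * ((s j * s i) ^ (l + 1) * (s j * (s j * s i))) := by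
              rw [show l + 2 = (l + 1) + 1 from rfl, pow_succ']
              simp only [mul_assoc]
          _ = (s j * s i) ^ (l + 1) * (s j * (s j * s i)) := by rw [hcq, one_mul]
          _ = (s j * s i) ^ (l + 1) * s i := by rw [cs.simple_mul_simple_cancel_left]
          _ = ((s j * s i) ^ l * (s j * s i)) * s i := by rw [← pow_succ]
          _ = (s j * s i) ^ l * (s j * (s i * s i)) := by simp only [mul_assoc]
          _ = (s j * s i) ^ l * s j := by rw [cs.simple_mul_simple_self]; simp
    have hsucc : (sigma cs i * sigma cs j) ^ (k + 1)
        = (sigma cs i * sigma cs j) ^ k * (sigma cs i * sigma cs j) := pow_succ _ _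
    rw [hsucc]
    show ((sigma cs i * sigma cs j) ^ k) ((sigma cs i * sigma cs j) p) = _
    rw [sigma_mul_apply, ih]
    rw [Prod.ext_iff]
    refine ⟨?_, ?_⟩
    · dsimp only
      rw [pow_succ (s i * s j), pow_succ' (s j * s i)]
      simp only [mul_assoc]
    · dsimp only
      have h2 : (2 : ℕ) * (k + 1) = (2 * k + 1) + 1 := by ring
      rw [h2, Finset.sum_range_succ', Finset.sum_range_succ']
      have e0 : ((s j * s i) ^ (0:ℕ) * s j : W) = s j := by simp
      have e1 : ((s j * s i) ^ (0+1:ℕ) * s j : W) = (s j * s i) * s j := by simp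
      rw [e0, e1]
      have hcong : ∀ l ∈ Finset.range (2 * k),
          (if (s i * s j) * p.1 * (s j * s i) = (s j * s i) ^ l * s j then (1 : ZMod 2) else 0)
            = if p.1 = (s j * s i) ^ (l + 1 + 1) * s j then 1 else 0 := by
        intro l _
        rw [show l + 1 + 1 = l + 2 by omega, if_congr (hq l) rfl rfl]
      rw [Finset.sum_congr rfl hcong]
      ring

lemma isLiftable : M.IsLiftable (fun i => sigma cs i) := by
  intro i j
  have hm1 : (s i * s j) ^ M i j = 1 := cs.simple_mul_simple_pow i j
  have hm2 : (s j * s i) ^ M i j = 1 := cs.simple_mul_simple_pow' i j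
  funext p
  rw [sigma_pow_apply cs i j (M i j) p, hm1, hm2]
  have hsum : ∑ l ∈ Finset.range (2 * M i j),
      (if p.1 = (s j * s i) ^ l * s j then (1 : ZMod 2) else 0) = 0 := by
    have h2 : 2 * M i j = M i j + M i j := by ring
    rw [h2, Finset.sum_range_add]
    have hc : ∀ l ∈ Finset.range (M i j),
        (if p.1 = (s j * s i) ^ (M i j + l) * s j then (1 : ZMod 2) else 0)
          = if p.1 = (s j * s i) ^ l * s j then 1 else 0 := by
      intro l _
      rw [pow_add, hm2, one_mul]
    rw [Finset.sum_congr rfl hc]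
    rw [← Finset.sum_add_distrib]
    have ha : ∀ a : ZMod 2, a + a = 0 := by decide
    rw [Finset.sum_congr rfl (fun l _ => ha _)]
    simp
  rw [hsum]
  show _ = p
  simp

/-- The sign homomorphism `W →* End (W × ZMod 2)`. -/
noncomputable def phi : W →* Function.End (W × ZMod 2) :=
  cs.lift ⟨fun i => sigma cs i, isLiftable cs⟩

/-- `eta cs w t` is the parity of the number of times `t` occurs in the right
inversion sequence of any word for `w`. -/
noncomputable def eta (w t : W) : ZMod 2 := (phi cs w (t, 0)).2

lemma phi_simple (i : B) : phi cs (s i) = sigma cs i := by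
  unfold phi
  exact cs.lift_apply_simple (isLiftable cs) i

lemma phi_apply (w : W) : ∀ t : W, ∀ ε : ZMod 2,
    phi cs w (t, ε) = (w * t * w⁻¹, ε + eta cs w t) := by
  induction w using cs.simple_induction_left with
  | one =>
    intro t ε
    have h1 : phi cs 1 = 1 := map_one _
    unfold eta
    rw [h1]
    show (t, ε) = (1 * t * 1⁻¹, ε + ((t, (0:ZMod 2))).2)
    simp
  | mul_simple_left w i ih =>
    intro t ε
    have hm : phi cs (s i * w) = phi cs (s i) * phi cs w := map_mul _ _ _
    have happ : ∀ δ : ZMod 2, phi cs (s i * w) (t, δ)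
        = (s i * (w * t * w⁻¹) * s i,
            δ + eta cs w t + if w * t * w⁻¹ = s i then 1 else 0) := by
      intro δ
      rw [hm]
      show phi cs (s i) (phi cs w (t, δ)) = _
      rw [ih t δ, phi_simple]
      rfl
    have heta : eta cs (s i * w) t
        = eta cs w t + if w * t * w⁻¹ = s i then 1 else 0 := by
      have h0 : eta cs (s i * w) t = ((phi cs) (s i * w) (t, 0)).2 := rfl
      rw [h0, happ 0]
      show (0 : ZMod 2) + eta cs w t + (if w * t * w⁻¹ = s i then 1 else 0)
        = eta cs w t + (if w * t * w⁻¹ = s i then 1 else 0)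
      rw [zero_add]
    rw [happ ε, heta]
    rw [Prod.ext_iff]
    refine ⟨?_, ?_⟩
    · dsimp only; rw [mul_inv_rev, cs.inv_simple]; simp only [mul_assoc]
    · dsimp only; unfold eta; ring

lemma eta_mul (u v t : W) :
    eta cs (u * v) t = eta cs u (v * t * v⁻¹) + eta cs v t := by
  have h : phi cs (u * v) (t, 0) = phi cs u (phi cs v (t, 0)) := by
    rw [map_mul]; rfl
  unfold eta
  rw [h, phi_apply cs v t 0, phi_apply cs u (v * t * v⁻¹) (0 + eta cs v t)]
  dsimp only
  unfold eta
  ring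

lemma eta_simple (i : B) (t : W) :
    eta cs (s i) t = if t = s i then 1 else 0 := by
  unfold eta
  rw [phi_simple]
  show (0 : ZMod 2) + _ = _
  rw [zero_add]

lemma eta_one (t : W) : eta cs 1 t = 0 := by
  have h := eta_mul cs 1 1 t
  rw [one_mul, one_mul, inv_one, mul_one] at h
  have h2 : ∀ a : ZMod 2, a = a + a → a = 0 := by decide
  exact h2 _ h

lemma eta_inv (u t : W) : eta cs u⁻¹ t = eta cs u (u⁻¹ * t * u) := by
  have h := eta_mul cs u u⁻¹ t
  rw [mul_inv_cancel, eta_one] at h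
  rw [inv_inv] at h
  have h2 : ∀ a b : ZMod 2, 0 = a + b → b = a := by decide
  exact h2 _ _ h

/-- A reflection `t` occurs in its own inversion set. -/
lemma eta_self {t : W} (ht : cs.IsReflection t) : eta cs t t = 1 := by
  obtain ⟨u, i, rfl⟩ := ht
  have key : u * (s i) * u⁻¹ = u * ((s i) * u⁻¹) := by rw [mul_assoc]
  rw [key, eta_mul cs u ((s i) * u⁻¹)]
  have h1 : ((s i) * u⁻¹) * (u * ((s i) * u⁻¹)) * ((s i) * u⁻¹)⁻¹ = s i := by
    rw [mul_inv_rev, cs.inv_simple, inv_inv]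
    calc (s i * u⁻¹) * (u * (s i * u⁻¹)) * (u * s i)
        = s i * ((u⁻¹ * u) * (s i * ((u⁻¹ * u) * s i))) := by simp only [mul_assoc]
      _ = s i * (s i * s i) := by rw [inv_mul_cancel]; simp only [one_mul]
      _ = s i := by rw [cs.simple_mul_simple_self, mul_one]
  rw [h1]
  rw [eta_mul cs (s i) u⁻¹]
  have h2 : u⁻¹ * (u * ((s i) * u⁻¹)) * (u⁻¹)⁻¹ = s i := by
    rw [inv_inv]
    calc u⁻¹ * (u * (s i * u⁻¹)) * u = (u⁻¹ * u) * s i * (u⁻¹ * u) := by simp only [mul_assoc]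
      _ = s i := by rw [inv_mul_cancel]; simp
  have h2' : u⁻¹ * (u * ((s i) * u⁻¹)) * u = s i := by
    calc u⁻¹ * (u * (s i * u⁻¹)) * u = (u⁻¹ * u) * s i * (u⁻¹ * u) := by simp only [mul_assoc]
      _ = s i := by rw [inv_mul_cancel]; simp
  rw [h2, eta_simple, if_pos rfl]
  rw [eta_inv cs u]
  rw [h2']
  have h3 : ∀ a : ZMod 2, a + (1 + a) = 1 := by decide
  exact h3 _

/-- If `t` does not occur in the right inversion sequence of a word for `w`,
then `eta cs w t = 0`. -/
lemma eta_eq_zero_of_notMem (ω : List B) (t : W) (h : t ∉ ris ω) :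
    eta cs (π ω) t = 0 := by
  induction ω with
  | nil => simpa using eta_one cs t
  | cons i ω ih =>
    rw [CoxeterSystem.rightInvSeq] at h
    simp only [List.mem_cons, not_or] at h
    obtain ⟨h1, h2⟩ := h
    rw [cs.wordProd_cons, eta_mul cs (s i) (π ω) t, eta_simple, ih h2]
    rw [if_neg, zero_add]
    intro hc
    apply h1
    have h3 : (π ω)⁻¹ * ((π ω) * t * (π ω)⁻¹) * (π ω) = t := by
      calc (π ω)⁻¹ * ((π ω) * t * (π ω)⁻¹) * (π ω)
          = ((π ω)⁻¹ * (π ω)) * t * ((π ω)⁻¹ * (π ω)) := by simp only [mul_assoc]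
        _ = t := by rw [inv_mul_cancel]; simp
    rw [← h3, hc]

lemma isRightInversion_of_eta {w t : W} (h : eta cs w t = 1) :
    cs.IsRightInversion w t := by
  obtain ⟨ω, hred, rfl⟩ := cs.exists_reduced_word' w
  have hmem : t ∈ ris ω := by
    by_contra hc
    rw [eta_eq_zero_of_notMem cs ω t hc] at h
    exact absurd h (by decide)
  exact cs.isRightInversion_of_mem_rightInvSeq hred hmem

lemma eta_of_isRightInversion {w t : W} (h : cs.IsRightInversion w t) :
    eta cs w t = 1 := by
  have ht : t * t = 1 := h.1.mul_self
  by_contra hc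
  have h0 : eta cs w t = 0 := by
    have h2 : ∀ a : ZMod 2, ¬ a = 1 → a = 0 := by decide
    exact h2 _ hc
  have key : eta cs (w * t) t = 1 := by
    rw [eta_mul cs w t t]
    have h1 : t * t * t⁻¹ = t := by rw [ht]; simp [← ht]
    rw [h1, h0, zero_add]
    exact eta_self cs h.1
  have h4 := (isRightInversion_of_eta cs key).2
  rw [mul_assoc, ht, mul_one] at h4
  have h5 := h.2
  omega

lemma eta_eq_one_iff (w t : W) :
    eta cs w t = 1 ↔ cs.IsRightInversion w t :=
  ⟨isRightInversion_of_eta cs, eta_of_isRightInversion cs⟩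

/-- The right inversion set of `w`, as the set where `eta` is `1`. -/
def Dset (w : W) : Set W := {t : W | eta cs w t = 1}

lemma coxN_inv (w : W) : coxN cs w⁻¹ = Dset cs w := by
  ext t
  show (cs.IsReflection t ∧ ℓ (t * w⁻¹) < ℓ w⁻¹) ↔ eta cs w t = 1
  rw [eta_eq_one_iff]
  exact (cs.isLeftInversion_inv_iff (w := w) (t := t))

lemma coxN_eq (w : W) : coxN cs w = Dset cs w⁻¹ := by
  have h := coxN_inv cs w⁻¹
  rwa [inv_inv] at h

lemma Dset_eq_ris (ω : List B) (hred : cs.IsReduced ω) :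
    Dset cs (π ω) = {t : W | t ∈ ris ω} := by
  ext t
  constructor
  · intro h
    by_contra hc
    have h1 := eta_eq_zero_of_notMem cs ω t hc
    have h2 : eta cs (π ω) t = 1 := h
    rw [h1] at h2
    exact absurd h2 (by decide)
  · intro h
    show eta cs (π ω) t = 1
    rw [eta_eq_one_iff]
    exact cs.isRightInversion_of_mem_rightInvSeq hred h

lemma Dset_finite (w : W) : (Dset cs w).Finite := by
  obtain ⟨ω, hred, rfl⟩ := cs.exists_reduced_word' w
  rw [Dset_eq_ris cs ω hred]
  exact (ris ω).finite_toSet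

lemma ncard_Dset (w : W) : (Dset cs w).ncard = ℓ w := by
  obtain ⟨ω, hred, rfl⟩ := cs.exists_reduced_word' w
  rw [Dset_eq_ris cs ω hred]
  have h1 : {t : W | t ∈ ris ω} = ((ris ω).toFinset : Set W) := by
    ext t; simp
  rw [h1, Set.ncard_coe_finset]
  rw [List.toFinset_card_of_nodup (hred.nodup_rightInvSeq)]
  rw [cs.length_rightInvSeq]
  exact hred.symm

lemma conj_injective (g : W) : Function.Injective (fun t : W => g * t * g⁻¹) := by
  intro a b h
  dsimp only at h
  have h1 : g * a = g * b := mul_right_cancel h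
  exact mul_left_cancel h1

lemma mem_conj_image (g : W) (S : Set W) (t : W) :
    t ∈ (fun t : W => g * t * g⁻¹) '' S ↔ g⁻¹ * t * g ∈ S := by
  constructor
  · rintro ⟨u, hu, rfl⟩
    have h1 : g⁻¹ * (g * u * g⁻¹) * g = u := by
      calc g⁻¹ * (g * u * g⁻¹) * g = (g⁻¹ * g) * u * (g⁻¹ * g) := by simp only [mul_assoc]
        _ = u := by rw [inv_mul_cancel]; simp
    rwa [h1]
  · intro h
    refine ⟨g⁻¹ * t * g, h, ?_⟩
    calc g * (g⁻¹ * t * g) * g⁻¹ = (g * g⁻¹) * t * (g * g⁻¹) := by simp only [mul_assoc]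
      _ = t := by rw [mul_inv_cancel]; simp

lemma Dset_mul (x y : W) :
    Dset cs (x * y) = ((fun t : W => y⁻¹ * t * y) '' Dset cs x) ∆ Dset cs y := by
  ext t
  rw [Set.mem_symmDiff]
  have himg : t ∈ (fun t : W => y⁻¹ * t * y) '' Dset cs x
      ↔ eta cs x (y * t * y⁻¹) = 1 := by
    have h := mem_conj_image y⁻¹ (Dset cs x) t
    rw [inv_inv] at h
    exact h
  rw [himg]
  show eta cs (x * y) t = 1 ↔ _
  rw [eta_mul cs x y t]
  show _ ↔ (eta cs x (y * t * y⁻¹) = 1 ∧ ¬ eta cs y t = 1)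
    ∨ (eta cs y t = 1 ∧ ¬ eta cs x (y * t * y⁻¹) = 1)
  generalize eta cs x (y * t * y⁻¹) = a
  generalize eta cs y t = b
  revert a b
  decide

lemma Dset_inv (y : W) :
    Dset cs y⁻¹ = (fun t : W => y * t * y⁻¹) '' Dset cs y := by
  ext t
  rw [mem_conj_image]
  show eta cs y⁻¹ t = 1 ↔ eta cs y (y⁻¹ * t * y) = 1
  rw [eta_inv cs y t]

/-- The key counting identity for finite sets. -/
lemma count_key {α : Type*} (P Q A : Set α) (hP : P.Finite) (hQ : Q.Finite) :
    ((Q ∆ P).ncard : ℤ) - 2 * (((Q ∆ P) ∩ A).ncard : ℤ) =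
      ((P.ncard : ℤ) - 2 * ((P ∩ A).ncard : ℤ))
        + ((Q.ncard : ℤ) - 2 * ((Q ∩ (P ∆ A)).ncard : ℤ)) := by
  classical
  set U : Finset α := hP.toFinset ∪ hQ.toFinset with hU
  have hPU : P ⊆ ↑U := by
    intro a ha
    simp only [hU, Finset.coe_union, Set.mem_union, Set.Finite.coe_toFinset]
    exact Or.inl ha
  have hQU : Q ⊆ ↑U := by
    intro a ha
    simp only [hU, Finset.coe_union, Set.mem_union, Set.Finite.coe_toFinset]
    exact Or.inr ha
  have key : ∀ S : Set α, S ⊆ ↑U →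
      (S.ncard : ℤ) = ∑ a ∈ U, (if a ∈ S then (1 : ℤ) else 0) := by
    intro S hS
    have h1 : S = ↑(U.filter (· ∈ S)) := by
      ext a
      simp only [Finset.coe_filter, Set.mem_setOf_eq]
      exact ⟨fun h => ⟨hS h, h⟩, fun h => h.2⟩
    have h2 : S.ncard = (U.filter (· ∈ S)).card := by
      conv_lhs => rw [h1]
      rw [Set.ncard_coe_finset]
    rw [h2, Finset.card_filter]
    push_cast
    rfl
  have hsub1 : Q ∆ P ⊆ ↑U := by
    intro a ha
    rcases Set.mem_symmDiff.mp ha with ⟨h, _⟩ | ⟨h, _⟩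
    · exact hQU h
    · exact hPU h
  have hsub2 : (Q ∆ P) ∩ A ⊆ ↑U := fun a ha => hsub1 ha.1
  have hsub3 : P ∩ A ⊆ ↑U := fun a ha => hPU ha.1
  have hsub4 : Q ∩ (P ∆ A) ⊆ ↑U := fun a ha => hQU ha.1
  rw [key _ hsub1, key _ hsub2, key _ hsub3, key _ hsub4, key _ hPU, key _ hQU]
  rw [Finset.mul_sum, Finset.mul_sum, Finset.mul_sum,
    ← Finset.sum_sub_distrib, ← Finset.sum_sub_distrib, ← Finset.sum_sub_distrib,
    ← Finset.sum_add_distrib]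
  refine Finset.sum_congr rfl fun a _ => ?_
  by_cases hp : a ∈ P <;> by_cases hq : a ∈ Q <;> by_cases ha : a ∈ A <;>
    simp [Set.mem_symmDiff, Set.mem_inter_iff, hp, hq, ha]

end TwistedAux

/-- For any `A ∈ 𝒫(T)` and any `x, y ∈ W`, `ℓ_A(xy) = ℓ_A(y) + ℓ_{y·A}(x)`. -/
theorem twistedLength_mul (cs : CoxeterSystem M W) (A : Set W)
    (hA : A ⊆ {t | cs.IsReflection t}) (x y : W) :
    twistedLength cs A (x * y) =
      twistedLength cs A y + twistedLength cs (twistedConj cs y A) x := by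
  open TwistedAux in
  classical
  set P : Set W := Dset cs y with hP
  set Q : Set W := (fun t : W => y⁻¹ * t * y) '' Dset cs x with hQ
  have hQ' : Q = (fun t : W => y⁻¹ * t * (y⁻¹)⁻¹) '' Dset cs x := by
    rw [hQ, inv_inv]
  have hPfin : P.Finite := Dset_finite cs y
  have hQfin : Q.Finite := (Dset_finite cs x).image _
  have hDxy : Dset cs (x * y) = Q ∆ P := Dset_mul cs x y
  have hlenxy : (cs.length (x * y) : ℤ) = ((Q ∆ P).ncard : ℤ) := by
    rw [← hDxy, ncard_Dset]
  have hleny : (cs.length y : ℤ) = (P.ncard : ℤ) := by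
    rw [hP, ncard_Dset]
  have hlenx : (cs.length x : ℤ) = (Q.ncard : ℤ) := by
    rw [hQ', Set.ncard_image_of_injective _ (conj_injective y⁻¹), ncard_Dset]
  have htc : twistedConj cs y A = (fun t : W => y * t * y⁻¹) '' (P ∆ A) := by
    unfold twistedConj
    rw [coxN_eq cs y, Dset_inv cs y, ← hP]
    rw [Set.image_symmDiff (conj_injective y)]
  have hQint : (coxN cs x⁻¹ ∩ twistedConj cs y A).ncard = (Q ∩ (P ∆ A)).ncard := by
    rw [htc, coxN_inv cs x]
    have himg : (fun t : W => y⁻¹ * t * (y⁻¹)⁻¹) ''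
          (Dset cs x ∩ ((fun t : W => y * t * y⁻¹) '' (P ∆ A)))
        = Q ∩ (P ∆ A) := by
      rw [Set.image_inter (conj_injective y⁻¹), ← hQ']
      congr 1
      ext t
      rw [TwistedAux.mem_conj_image y⁻¹]
      rw [inv_inv]
      rw [TwistedAux.mem_conj_image y]
      constructor
      · intro h
        have he : y⁻¹ * (y * t * y⁻¹) * y = t := by
          calc y⁻¹ * (y * t * y⁻¹) * y = (y⁻¹ * y) * t * (y⁻¹ * y) := by simp only [mul_assoc]
            _ = t := by rw [inv_mul_cancel]; simp
        rwa [he] at h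
      · intro h
        have he : y⁻¹ * (y * t * y⁻¹) * y = t := by
          calc y⁻¹ * (y * t * y⁻¹) * y = (y⁻¹ * y) * t * (y⁻¹ * y) := by simp only [mul_assoc]
            _ = t := by rw [inv_mul_cancel]; simp
        rwa [he]
    calc (Dset cs x ∩ (fun t : W => y * t * y⁻¹) '' (P ∆ A)).ncard
        = ((fun t : W => y⁻¹ * t * (y⁻¹)⁻¹) ''
            (Dset cs x ∩ (fun t : W => y * t * y⁻¹) '' (P ∆ A))).ncard := by
          rw [Set.ncard_image_of_injective _ (conj_injective y⁻¹)]
      _ = (Q ∩ (P ∆ A)).ncard := by rw [himg]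
  unfold twistedLength
  rw [coxN_inv cs (x * y), hDxy, coxN_inv cs y, ← hP, hQint, hlenxy, hleny, hlenx]
  exact TwistedAux.count_key P Q A hPfin hQfin
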